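/- arXiv:1610.03025 — 2 statements merged into one kernel-verified Lean document; each statement's English description precedes it below -/
import Mathlib

section
/- Let α ∈ (0,1), n ∈ ℕ, and θ ∈ (0, 2π). Then Σ_{k=0}^{n} c^{n+1}_k e^{i(k−n−1)θ} ≠ 1. Consequently, no point e^{iθ} of the unit circle other than ξ = 1 is a root of the polynomial ξ^{n+1} − Σ_{k=0}^{n} c^{n+1}_k ξ^k. -/
open scoped BigOperators

/-- The L1 coefficients `c^{n+1}_k` for the discrete Caputo derivative:
`c^{n+1}_0 = (n+1)^{1-α} - n^{1-α}` and, for `1 ≤ k ≤ n`,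
`c^{n+1}_k = 2(n+1-k)^{1-α} - (n+2-k)^{1-α} - (n-k)^{1-α}`. -/
noncomputable def caputoCoeff (α : ℝ) (n k : ℕ) : ℝ :=
  if k = 0 then ((n : ℝ) + 1) ^ (1 - α) - (n : ℝ) ^ (1 - α)
  else 2 * ((n : ℝ) + 1 - (k : ℝ)) ^ (1 - α) - ((n : ℝ) + 2 - (k : ℝ)) ^ (1 - α)
    - ((n : ℝ) - (k : ℝ)) ^ (1 - α)

/-!
The coefficients `c^{n+1}_k` are positive (the `k = 0` one by monotonicity of `t ↦ t^{1-α}`,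
the others by its strict concavity) and telescope to `1`, so `Σ_k c^{n+1}_k e^{i(k-n-1)θ}` is a
convex combination of points of the closed unit disk. Since `1` is an extreme point of the disk,
such a combination can only equal `1` if every point carrying positive weight is `1`; but the
last point `e^{-iθ}` is not `1`. Dividing by `e^{i(n+1)θ}` gives the statement about roots.
-/

theorem StrictConcaveOn.add_lt_two_mul_midpoint {s : Set ℝ} {f : ℝ → ℝ}
    (hf : StrictConcaveOn ℝ s f) {a b : ℝ} (ha : a ∈ s) (hb : b ∈ s) (hab : a ≠ b) :
    f a + f b < 2 * f ((a + b) / 2) := by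
  have h := hf.2 ha hb hab (by norm_num : (0 : ℝ) < 1 / 2) (by norm_num : (0 : ℝ) < 1 / 2)
    (by norm_num)
  simp only [smul_eq_mul] at h
  rw [show 1 / 2 * a + 1 / 2 * b = (a + b) / 2 by ring] at h
  linarith

theorem caputoCoeff_pos {α : ℝ} (hα : α ∈ Set.Ioo (0 : ℝ) 1) {n k : ℕ} (hk : k ≤ n) :
    0 < caputoCoeff α n k := by
  obtain ⟨hα0, hα1⟩ := hα
  unfold caputoCoeff
  split_ifs with hk0
  · have hmono := Real.rpow_lt_rpow (n.cast_nonneg : (0 : ℝ) ≤ n) (lt_add_one (n : ℝ)) (sub_pos.2 hα1)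
    linarith
  · have hkn : (k : ℝ) ≤ n := by exact_mod_cast hk
    have hconcave :=
      (Real.strictConcaveOn_rpow (sub_pos.2 hα1) (by linarith)).add_lt_two_mul_midpoint
      (a := (n : ℝ) - k) (b := (n : ℝ) + 2 - k) (by simpa using hkn)
      (by simp only [Set.mem_Ici]; linarith) (by linarith)
    rw [show ((n : ℝ) - k + (n + 2 - k)) / 2 = n + 1 - k by ring] at hconcave
    linarith

theorem sum_range_caputoCoeff {α : ℝ} (hα : α ≠ 1) (n : ℕ) :
    ∑ k ∈ Finset.range (n + 1), caputoCoeff α n k = 1 := by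
  set g : ℕ → ℝ := fun k => ((n : ℝ) + 1 - k) ^ (1 - α) - ((n : ℝ) - k) ^ (1 - α)
  have hstep (k : ℕ) : caputoCoeff α n (k + 1) = g (k + 1) - g k := by
    simp only [caputoCoeff, g, Nat.succ_ne_zero, if_false]
    push_cast
    ring_nf
  have hg0 : caputoCoeff α n 0 = g 0 := by simp [caputoCoeff, g]
  have hgn : g n = 1 := by
    simp [g, Real.zero_rpow (sub_ne_zero.2 hα.symm)]
  rw [Finset.sum_range_succ', Finset.sum_congr rfl fun k _ => hstep k, Finset.sum_range_sub,
    hg0, hgn, sub_add_cancel]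

namespace Complex

theorem re_lt_one_of_norm_le_one_of_ne_one {z : ℂ} (hz : ‖z‖ ≤ 1) (hz1 : z ≠ 1) : z.re < 1 := by
  by_contra! hre
  have hre1 : z.re = 1 := le_antisymm ((re_le_norm z).trans hz) hre
  have him : z.im = 0 := abs_re_eq_norm.1 <|
    le_antisymm (abs_re_le_norm z) (by rw [hre1, abs_one]; exact hz)
  exact hz1 (ext (by simpa using hre1) (by simpa using him))

theorem sum_ofReal_mul_ne_one_of_norm_le_one {ι : Type*} {s : Finset ι} {w : ι → ℝ} {z : ι → ℂ}
    (hw : ∀ i ∈ s, 0 ≤ w i) (hw1 : ∑ i ∈ s, w i = 1) (hz : ∀ i ∈ s, ‖z i‖ ≤ 1)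
    {j : ι} (hj : j ∈ s) (hwj : 0 < w j) (hzj : z j ≠ 1) :
    ∑ i ∈ s, (w i : ℂ) * z i ≠ 1 := by
  intro hsum
  have hre : ∑ i ∈ s, w i * (z i).re = 1 := by
    simpa [re_sum, re_ofReal_mul] using congrArg re hsum
  have hlt : ∑ i ∈ s, w i * (z i).re < ∑ i ∈ s, w i := by
    refine Finset.sum_lt_sum (fun i hi => ?_) ⟨j, hj, ?_⟩
    · exact mul_le_of_le_one_right (hw i hi) ((re_le_norm _).trans (hz i hi))
    · exact mul_lt_of_lt_one_right hwj (re_lt_one_of_norm_le_one_of_ne_one (hz j hj) hzj)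
  linarith

theorem exp_neg_I_mul_ne_one {θ : ℝ} (hθ : θ ∈ Set.Ioo (0 : ℝ) (2 * Real.pi)) :
    exp (I * ((-θ : ℝ) : ℂ)) ≠ 1 := by
  intro h
  have hcos : Real.cos θ = 1 := by
    rw [mul_comm] at h
    simpa only [exp_ofReal_mul_I_re, Real.cos_neg, one_re] using congrArg re h
  exact hθ.1.ne' <|
    (Real.cos_eq_one_iff_of_lt_of_lt (by linarith [hθ.1, Real.pi_pos]) hθ.2).1 hcos

end Complex

/-- for `θ ∈ (0, 2π)`, `Σ_{k=0}^n c^{n+1}_k e^{i(k-n-1)θ} ≠ 1`;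
consequently `e^{iθ}` is not a root of `ξ^{n+1} - Σ_{k=0}^n c^{n+1}_k ξ^k`. -/
theorem no_unit_root_off_one (α : ℝ) (hα : α ∈ Set.Ioo (0 : ℝ) 1) (n : ℕ)
    (θ : ℝ) (hθ : θ ∈ Set.Ioo (0 : ℝ) (2 * Real.pi)) :
    (∑ k ∈ Finset.range (n + 1), (caputoCoeff α n k : ℂ)
        * Complex.exp (Complex.I * ((((k : ℝ) - (n : ℝ) - 1) * θ : ℝ) : ℂ)) ≠ 1) ∧
    (Complex.exp (Complex.I * (θ : ℂ))) ^ (n + 1)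
      - ∑ k ∈ Finset.range (n + 1), (caputoCoeff α n k : ℂ)
          * (Complex.exp (Complex.I * (θ : ℂ))) ^ k ≠ 0 := by
  set ξ := Complex.exp (Complex.I * (θ : ℂ))
  have hcombination : ∑ k ∈ Finset.range (n + 1), (caputoCoeff α n k : ℂ)
      * Complex.exp (Complex.I * ((((k : ℝ) - (n : ℝ) - 1) * θ : ℝ) : ℂ)) ≠ 1 := by
    refine Complex.sum_ofReal_mul_ne_one_of_norm_le_one
      (fun k hk => (caputoCoeff_pos hα (Nat.lt_succ_iff.1 (Finset.mem_range.1 hk))).le)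
      (sum_range_caputoCoeff hα.2.ne n) (fun k _ => (Complex.norm_exp_I_mul_ofReal _).le)
      (Finset.self_mem_range_succ n) (caputoCoeff_pos hα le_rfl) ?_
    simpa using Complex.exp_neg_I_mul_ne_one hθ
  refine ⟨hcombination, fun hroot => hcombination ?_⟩
  have hξ : ξ ^ (n + 1) ≠ 0 := pow_ne_zero _ (Complex.exp_ne_zero _)
  have hpow (k : ℕ) : Complex.exp (Complex.I * ((((k : ℝ) - (n : ℝ) - 1) * θ : ℝ) : ℂ))
      = ξ ^ k / ξ ^ (n + 1) := by
    rw [← Complex.exp_nat_mul, ← Complex.exp_nat_mul, ← Complex.exp_sub]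
    congr 1
    push_cast
    ring
  simp only [hpow, mul_div_assoc', ← Finset.sum_div]
  rw [div_eq_one_iff_eq hξ]
  linear_combination -hroot
end

section
/- Suppose the family (U^n)_{n∈ℕ} solves the explicit upwind scheme and the CFL condition holds with bounds L⁺, L⁻. If the sequence j ↦ |U^0_j| is bounded above by a real number B, then |U^n_j| ≤ B for all n ∈ ℕ and j ∈ ℤ (discrete maximum principle). -/
/-!
By the mean value theorem the flux differences are `a (U^n_j - U^n_{j-1})` and
`b (U^n_{j+1} - U^n_j)` with `0 ≤ a ≤ L⁺` and `-L⁻ ≤ b ≤ 0`, so the scheme writes `U^{n+1}_j` as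
a combination of `U^k_j` (`k < n`), `U^n_j`, `U^n_{j-1}`, `U^n_{j+1}` with weights `c^{n+1}_k`,
`c^{n+1}_n - δ (a - b)`, `δ a`, `-δ b`. These sum to `1`, and they are nonnegative: the `c^{n+1}_k`
by concavity of `x ↦ x^{1-α}`, and `c^{n+1}_n ≥ 2 - 2^{1-α} ≥ δ (L⁺ + L⁻)` by the CFL condition.
Hence `|U^{n+1}_j|` is bounded by the bound on earlier levels; strong induction on `n` concludes.
-/

open scoped BigOperators

/-- `U` solves the explicit upwind scheme with time steps indexed by `ℕ`
and space indexed by `ℤ`. -/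
def SolvesExplicitScheme (α δ : ℝ) (fp fm : ℝ → ℝ) (U : ℕ → ℤ → ℝ) : Prop :=
  ∀ (n : ℕ) (j : ℤ),
    U (n + 1) j = (∑ k ∈ Finset.range (n + 1), caputoCoeff α n k * U k j)
      - δ * (fp (U n j) - fp (U n (j - 1)))
      - δ * (fm (U n (j + 1)) - fm (U n j))

/-- The CFL condition with bounds `Lp, Lm`:
`(f⁺)' ≤ Lp`, `(f⁻)' ≥ -Lm` and `δ (Lp + Lm) ≤ 2 - 2^{1-α}`. -/
def CFLCondition (α δ Lp Lm : ℝ) (fp fm : ℝ → ℝ) : Prop :=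
  0 ≤ Lp ∧ 0 ≤ Lm ∧ (∀ x, deriv fp x ≤ Lp) ∧ (∀ x, -Lm ≤ deriv fm x) ∧
    δ * (Lp + Lm) ≤ 2 - (2 : ℝ) ^ (1 - α)

open Finset

lemma exists_sub_eq_mul_sub_of_deriv_mem {f : ℝ → ℝ} (hf : Differentiable ℝ f)
    {S : Set ℝ} (hS : ∀ t, deriv f t ∈ S) (x y : ℝ) : ∃ a ∈ S, f x - f y = a * (x - y) := by
  rcases lt_trichotomy x y with hxy | rfl | hxy
  · obtain ⟨c, -, hc⟩ := exists_deriv_eq_slope f hxy hf.continuous.continuousOn hf.differentiableOn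
    refine ⟨deriv f c, hS c, ?_⟩
    rw [hc]
    field_simp [sub_ne_zero.2 hxy.ne']
    ring
  · exact ⟨deriv f x, hS x, by ring⟩
  · obtain ⟨c, -, hc⟩ := exists_deriv_eq_slope f hxy hf.continuous.continuousOn hf.differentiableOn
    refine ⟨deriv f c, hS c, ?_⟩
    rw [hc]
    field_simp [sub_ne_zero.2 hxy.ne']

lemma abs_mul_le_mul_of_nonneg {w x B : ℝ} (hw : 0 ≤ w) (hx : |x| ≤ B) : |w * x| ≤ w * B := by
  rw [abs_mul, abs_of_nonneg hw]
  exact mul_le_mul_of_nonneg_left hx hw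

lemma abs_sum_mul_le_sum_mul {ι : Type*} (s : Finset ι) {w x : ι → ℝ} {B : ℝ}
    (hw : ∀ i ∈ s, 0 ≤ w i) (hx : ∀ i ∈ s, |x i| ≤ B) :
    |∑ i ∈ s, w i * x i| ≤ (∑ i ∈ s, w i) * B := by
  rw [sum_mul]
  exact (abs_sum_le_sum_abs _ _).trans
    (sum_le_sum fun i hi => abs_mul_le_mul_of_nonneg (hw i hi) (hx i hi))

lemma abs_upwind_step_le {n : ℕ} {c u : ℕ → ℝ} {p q v w B : ℝ} (hc : ∀ k ≤ n, 0 ≤ c k)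
    (hc_sum : ∑ k ∈ range (n + 1), c k = 1) (hp : 0 ≤ p) (hq : 0 ≤ q) (hpq : p + q ≤ c n)
    (hu : ∀ k ≤ n, |u k| ≤ B) (hv : |v| ≤ B) (hw : |w| ≤ B) :
    |∑ k ∈ range (n + 1), c k * u k - p * (u n - v) - q * (u n - w)| ≤ B := by
  rw [sum_range_succ] at hc_sum ⊢
  have h_past := abs_sum_mul_le_sum_mul (range n) (w := c) (x := u) (B := B)
    (fun k hk => hc k (mem_range.1 hk).le) (fun k hk => hu k (mem_range.1 hk).le)
  have h_now := abs_mul_le_mul_of_nonneg (sub_nonneg.2 hpq) (hu n le_rfl)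
  have h_left := abs_mul_le_mul_of_nonneg hp hv
  have h_right := abs_mul_le_mul_of_nonneg hq hw
  have h_split : ∑ k ∈ range n, c k * u k + c n * u n - p * (u n - v) - q * (u n - w)
      = ∑ k ∈ range n, c k * u k + (c n - (p + q)) * u n + p * v + q * w := by ring
  have h_total : (∑ k ∈ range n, c k) * B + c n * B = B := by rw [← add_mul, hc_sum, one_mul]
  rw [h_split, abs_le]
  rw [abs_le] at h_past h_now h_left h_right
  constructor <;>
    linarith [h_past.1, h_past.2, h_now.1, h_now.2, h_left.1, h_left.2, h_right.1, h_right.2]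

lemma rpow_add_rpow_le_two_mul_rpow {a p : ℝ} (ha : 0 ≤ a) (hp₀ : 0 ≤ p) (hp₁ : p ≤ 1) :
    a ^ p + (a + 2) ^ p ≤ 2 * (a + 1) ^ p := by
  have h := (Real.concaveOn_rpow hp₀ hp₁).2 (Set.mem_Ici.2 ha)
    (Set.mem_Ici.2 (by linarith : (0 : ℝ) ≤ a + 2)) (by norm_num : (0 : ℝ) ≤ 1 / 2)
    (by norm_num : (0 : ℝ) ≤ 1 / 2) (by norm_num)
  rw [smul_eq_mul, smul_eq_mul, smul_eq_mul, smul_eq_mul,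
    show 1 / 2 * a + 1 / 2 * (a + 2) = a + 1 by ring] at h
  linarith

lemma caputoCoeff_nonneg {α : ℝ} (hα0 : 0 ≤ α) (hα1 : α ≤ 1) {n k : ℕ} (hk : k ≤ n) :
    0 ≤ caputoCoeff α n k := by
  unfold caputoCoeff
  split_ifs
  · have : (n : ℝ) ^ (1 - α) ≤ ((n : ℝ) + 1) ^ (1 - α) := by
      gcongr
      linarith
    linarith
  · have h := rpow_add_rpow_le_two_mul_rpow (a := (n : ℝ) - k)
      (sub_nonneg.2 (by exact_mod_cast hk)) (by linarith : 0 ≤ 1 - α) (by linarith)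
    rw [show (n : ℝ) - k + 2 = n + 2 - k by ring, show (n : ℝ) - k + 1 = n + 1 - k by ring] at h
    linarith

/-- The coefficients telescope: `c^{n+1}_{i+1} = F (i+1) - F i`, `F 0 = c^{n+1}_0`, `F n = 1`. -/
lemma sum_caputoCoeff {α : ℝ} (hα : α ≠ 1) (n : ℕ) :
    ∑ k ∈ range (n + 1), caputoCoeff α n k = 1 := by
  set F : ℕ → ℝ := fun i => ((n : ℝ) + 1 - i) ^ (1 - α) - ((n : ℝ) - i) ^ (1 - α)
  have h_succ : ∀ i ∈ range n, caputoCoeff α n (i + 1) = F (i + 1) - F i := by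
    intro i _
    simp only [F, caputoCoeff, Nat.succ_ne_zero, if_false]
    push_cast
    rw [show (n : ℝ) + 1 - (i + 1) = n - i by ring, show (n : ℝ) + 2 - (i + 1) = n + 1 - i by ring]
    ring
  have hF_last : F n = 1 := by
    simp [F, Real.zero_rpow (sub_ne_zero.2 hα.symm)]
  have hF_zero : F 0 = caputoCoeff α n 0 := by
    simp [F, caputoCoeff]
  rw [sum_range_succ', sum_congr rfl h_succ, sum_range_sub, hF_last, hF_zero]
  ring

lemma two_sub_two_rpow_le_caputoCoeff_self {α : ℝ} (hα : α < 1) (n : ℕ) :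
    2 - (2 : ℝ) ^ (1 - α) ≤ caputoCoeff α n n := by
  have h_pos : 1 - α ≠ 0 := by linarith
  have h_two : (1 : ℝ) ≤ 2 ^ (1 - α) := Real.one_le_rpow (by norm_num) (by linarith)
  rcases n with _ | m
  · have h_zero : caputoCoeff α 0 0 = 1 := by simp [caputoCoeff, Real.zero_rpow h_pos]
    linarith
  · simp only [caputoCoeff, Nat.succ_ne_zero, if_false]
    push_cast
    rw [show (m : ℝ) + 1 + 1 - (m + 1) = 1 by ring, show (m : ℝ) + 1 + 2 - (m + 1) = 2 by ring,
      sub_self, Real.one_rpow, Real.zero_rpow h_pos]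
    linarith

lemma SolvesExplicitScheme.abs_succ_le {α δ Lp Lm B : ℝ} {fp fm : ℝ → ℝ} {U : ℕ → ℤ → ℝ}
    (hU : SolvesExplicitScheme α δ fp fm U) (hα0 : 0 ≤ α) (hα1 : α < 1) (hδ : 0 ≤ δ)
    (hfp : Differentiable ℝ fp) (hfm : Differentiable ℝ fm)
    (hfp' : ∀ x, 0 ≤ deriv fp x) (hfm' : ∀ x, deriv fm x ≤ 0)
    (hcfl : CFLCondition α δ Lp Lm fp fm) {n : ℕ} (hB : ∀ k ≤ n, ∀ j, |U k j| ≤ B) (j : ℤ) :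
    |U (n + 1) j| ≤ B := by
  obtain ⟨-, -, hfp_le, hfm_ge, hδL⟩ := hcfl
  obtain ⟨a, ⟨ha0, haL⟩, ha⟩ := exists_sub_eq_mul_sub_of_deriv_mem hfp (S := Set.Icc 0 Lp)
    (fun t => ⟨hfp' t, hfp_le t⟩) (U n j) (U n (j - 1))
  obtain ⟨b, ⟨hbL, hb0⟩, hb⟩ := exists_sub_eq_mul_sub_of_deriv_mem hfm (S := Set.Icc (-Lm) 0)
    (fun t => ⟨hfm_ge t, hfm' t⟩) (U n (j + 1)) (U n j)
  have h_cfl : δ * a + -(δ * b) ≤ caputoCoeff α n n :=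
    calc δ * a + -(δ * b) = δ * (a - b) := by ring
      _ ≤ δ * (Lp + Lm) := by gcongr; linarith
      _ ≤ 2 - (2 : ℝ) ^ (1 - α) := hδL
      _ ≤ caputoCoeff α n n := two_sub_two_rpow_le_caputoCoeff_self hα1 n
  have h_step : U (n + 1) j = ∑ k ∈ range (n + 1), caputoCoeff α n k * U k j
      - δ * a * (U n j - U n (j - 1)) - -(δ * b) * (U n j - U n (j + 1)) := by
    rw [hU, ha, hb]
    ring
  rw [h_step]
  exact abs_upwind_step_le (fun k hk => caputoCoeff_nonneg hα0 hα1.le hk)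
    (sum_caputoCoeff hα1.ne n)
    (mul_nonneg hδ ha0) (neg_nonneg.2 (mul_nonpos_of_nonneg_of_nonpos hδ hb0)) h_cfl
    (fun k hk => hB k hk j) (hB n le_rfl _) (hB n le_rfl _)

/-- discrete maximum principle for the explicit upwind scheme under
the CFL condition: if `|U^0_j| ≤ B` for all `j`, then `|U^n_j| ≤ B` for all `n, j`. -/
theorem explicit_upwind_max_principle (α τ h : ℝ) (hα : α ∈ Set.Ioo (0 : ℝ) 1)
    (hτ : 0 < τ) (hh : 0 < h) (δ : ℝ) (hδ : δ = τ ^ α / (h * Real.Gamma (2 - α)))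
    (fp fm : ℝ → ℝ) (hfp : Differentiable ℝ fp) (hfm : Differentiable ℝ fm)
    (hfp' : ∀ x, 0 ≤ deriv fp x) (hfm' : ∀ x, deriv fm x ≤ 0)
    (U : ℕ → ℤ → ℝ) (hU : SolvesExplicitScheme α δ fp fm U)
    (Lp Lm : ℝ) (hcfl : CFLCondition α δ Lp Lm fp fm)
    (B : ℝ) (hB : ∀ j : ℤ, |U 0 j| ≤ B) :
    ∀ (n : ℕ) (j : ℤ), |U n j| ≤ B := by
  have hδ0 : 0 ≤ δ := by
    have := Real.Gamma_pos_of_pos (by linarith [hα.2] : 0 < 2 - α)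
    rw [hδ]
    positivity
  intro n
  induction n using Nat.strong_induction_on with
  | _ n ih =>
    cases n with
    | zero => exact hB
    | succ n =>
      exact hU.abs_succ_le hα.1.le hα.2 hδ0 hfp hfm hfp' hfm' hcfl
        fun k hk => ih k (Nat.lt_succ_of_le hk)
end
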